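/- arXiv:2411.10699 — 4 statements merged into one kernel-verified Lean document; each statement's English description precedes it below -/
import Mathlib

section
/- Let y : [0,∞) → ℝ be differentiable and let α : ℝ → ℝ be locally Lipschitz, strictly increasing, with α(0) = 0. If y'(t) ≥ -α(y(t)) for all t ≥ 0 and y(0) ≥ 0, then y(t) ≥ 0 for all t ≥ 0. -/
/-!
If `y` ever became negative, take the last time `s` before that at which `y ≥ 0`. After `s`,
`y < 0`, so `α y < 0` and `y' ≥ -α y > 0`: `y` is strictly increasing there, which contradicts
`y s ≥ 0 > y t`.
-/

open Set

theorem ContinuousOn.exists_nonneg_forall_Ioc_neg {y : ℝ → ℝ} {a b : ℝ}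
    (hy : ContinuousOn y (Icc a b)) (hab : a ≤ b) (ha : 0 ≤ y a) :
    ∃ s ∈ Icc a b, 0 ≤ y s ∧ ∀ u ∈ Ioc s b, y u < 0 := by
  set A := Icc a b ∩ y ⁻¹' Ici 0
  have hA_closed : IsClosed A := hy.preimage_isClosed_of_isClosed isClosed_Icc isClosed_Ici
  have hA_bdd : BddAbove A := ⟨b, fun u hu => hu.1.2⟩
  obtain ⟨hs_mem, hs_nonneg⟩ : sSup A ∈ A := hA_closed.csSup_mem ⟨a, ⟨le_rfl, hab⟩, ha⟩ hA_bdd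
  refine ⟨sSup A, hs_mem, hs_nonneg, fun u hu => ?_⟩
  by_contra! hu_nonneg
  have hu_mem : u ∈ A := ⟨⟨hs_mem.1.trans hu.1.le, hu.2⟩, hu_nonneg⟩
  exact (le_csSup hA_bdd hu_mem).not_gt hu.1

theorem nonneg_of_deriv_pos_of_neg {y : ℝ → ℝ} {a b : ℝ} (hab : a ≤ b)
    (hy : ContinuousOn y (Icc a b)) (hderiv : ∀ u ∈ Ioo a b, y u < 0 → 0 < deriv y u)
    (ha : 0 ≤ y a) : 0 ≤ y b := by
  obtain ⟨s, hs, hys, hneg⟩ := hy.exists_nonneg_forall_Ioc_neg hab ha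
  by_contra! hyb
  have hsb : s < b := hs.2.lt_of_ne fun h => (h ▸ hyb).not_ge hys
  have hmono : StrictMonoOn y (Icc s b) := by
    refine strictMonoOn_of_deriv_pos (convex_Icc s b) (hy.mono (Icc_subset_Icc_left hs.1)) ?_
    rw [interior_Icc]
    exact fun u hu => hderiv u ⟨hs.1.trans_lt hu.1, hu.2⟩ (hneg u (Ioo_subset_Ioc_self hu))
  linarith [hmono (left_mem_Icc.2 hsb.le) (right_mem_Icc.2 hsb.le) hsb]

theorem cbf_forward_invariance_scalar_general
    (y : ℝ → ℝ) (α : ℝ → ℝ)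
    (hy : ∀ t, 0 ≤ t → DifferentiableAt ℝ y t)
    (hα_mono : StrictMono α)
    (hα_zero : α 0 = 0)
    (hineq : ∀ t, 0 ≤ t → -α (y t) ≤ deriv y t)
    (hy0 : 0 ≤ y 0) :
    ∀ t, 0 ≤ t → 0 ≤ y t := by
  intro t ht
  have hcont : ContinuousOn y (Icc 0 t) := fun u hu =>
    (hy u hu.1).continuousAt.continuousWithinAt
  refine nonneg_of_deriv_pos_of_neg ht hcont (fun u hu hyu => ?_) hy0
  have hαyu : α (y u) < 0 := hα_zero ▸ hα_mono hyu
  linarith [hineq u hu.1.le]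

/-- Scalar CBF comparison lemma: if `y` is differentiable on `[0,∞)`,
`α` is locally Lipschitz, strictly increasing with `α 0 = 0`,
`y' t ≥ -α (y t)` for all `t ≥ 0`, and `y 0 ≥ 0`, then `y t ≥ 0` for all `t ≥ 0`. -/
theorem cbf_forward_invariance_scalar
    (y : ℝ → ℝ) (α : ℝ → ℝ)
    (hy : ∀ t, 0 ≤ t → DifferentiableAt ℝ y t)
    (hα_lip : LocallyLipschitz α)
    (hα_mono : StrictMono α)
    (hα_zero : α 0 = 0)
    (hineq : ∀ t, 0 ≤ t → -α (y t) ≤ deriv y t)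
    (hy0 : 0 ≤ y 0) :
    ∀ t, 0 ≤ t → 0 ≤ y t :=
  cbf_forward_invariance_scalar_general y α hy hα_mono hα_zero hineq hy0
end

section
/- Let λ₁, λ₂ > 0 and let B : [0,∞) → ℝ be twice differentiable with B''(t) + (λ₁+λ₂)·B'(t) + λ₁λ₂·B(t) ≥ 0 for all t ≥ 0. If B(0) ≥ 0 and B'(0) + λ₁·B(0) ≥ 0, then B(t) ≥ B(0)·e^{-λ₁ t} ≥ 0 for all t ≥ 0. -/
lemma aux_gronwall (c : ℝ) (f : ℝ → ℝ) (hf : ∀ t, 0 ≤ t → DifferentiableAt ℝ f t)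
    (h : ∀ t, 0 ≤ t → 0 ≤ deriv f t + c * f t) :
    ∀ t, 0 ≤ t → f 0 ≤ f t * Real.exp (c * t) := by
  set g : ℝ → ℝ := fun t => f t * Real.exp (c * t) with hg
  have hgd : ∀ t, 0 ≤ t →
      HasDerivAt g ((deriv f t + c * f t) * Real.exp (c * t)) t := by
    intro t ht
    have h1 : HasDerivAt f (deriv f t) t := (hf t ht).hasDerivAt
    have h2 : HasDerivAt (fun t => Real.exp (c * t)) (c * Real.exp (c * t)) t := by
      simpa [mul_comm] using ((hasDerivAt_id t).const_mul c).exp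
    have : HasDerivAt g (deriv f t * Real.exp (c * t) + f t * (c * Real.exp (c * t))) t := h1.mul h2
    convert this using 1
    ring
  have hmono : MonotoneOn g (Set.Ici (0:ℝ)) := by
    apply monotoneOn_of_deriv_nonneg (convex_Ici 0)
    · intro t ht
      exact ((hgd t ht).continuousAt).continuousWithinAt
    · intro t ht
      rw [interior_Ici] at ht
      exact ((hgd t ht.le).differentiableAt).differentiableWithinAt
    · intro t ht
      rw [interior_Ici] at ht
      rw [(hgd t ht.le).deriv]
      exact mul_nonneg (h t ht.le) (Real.exp_pos _).le
  intro t ht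
  have := hmono Set.self_mem_Ici (Set.mem_Ici.mpr ht) ht
  simpa [g] using this

/-- Relative-degree-2 exponential CBF: if `B'' + (λ₁+λ₂) B' + λ₁ λ₂ B ≥ 0` on `[0,∞)`
with `λ₁, λ₂ > 0`, `B 0 ≥ 0` and `B' 0 + λ₁ B 0 ≥ 0`, then
`B t ≥ B 0 * exp (-λ₁ t) ≥ 0` for all `t ≥ 0`. -/
theorem ecbf_relative_degree_two
    (l₁ l₂ : ℝ) (hl₁ : 0 < l₁) (hl₂ : 0 < l₂) (B : ℝ → ℝ)
    (hB : ∀ t, 0 ≤ t → DifferentiableAt ℝ B t)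
    (hB' : ∀ t, 0 ≤ t → DifferentiableAt ℝ (deriv B) t)
    (hineq : ∀ t, 0 ≤ t →
      0 ≤ deriv (deriv B) t + (l₁ + l₂) * deriv B t + l₁ * l₂ * B t)
    (hB0 : 0 ≤ B 0)
    (hB'0 : 0 ≤ deriv B 0 + l₁ * B 0) :
    ∀ t, 0 ≤ t → B 0 * Real.exp (-l₁ * t) ≤ B t ∧ 0 ≤ B 0 * Real.exp (-l₁ * t) := by
  set f : ℝ → ℝ := fun s => deriv B s + l₁ * B s with hf
  have hfd : ∀ s, 0 ≤ s → DifferentiableAt ℝ f s := fun s hs =>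
    (hB' s hs).add ((hB s hs).const_mul l₁)
  have hderiv : ∀ s, 0 ≤ s → deriv f s = deriv (deriv B) s + l₁ * deriv B s := by
    intro s hs
    have : HasDerivAt f (deriv (deriv B) s + l₁ * deriv B s) s :=
      ((hB' s hs).hasDerivAt).add (((hB s hs).hasDerivAt).const_mul l₁)
    exact this.deriv
  have key : ∀ s, 0 ≤ s → 0 ≤ deriv B s + l₁ * B s := by
    intro s hs
    have h0 : f 0 ≤ f s * Real.exp (l₂ * s) := by
      refine aux_gronwall l₂ f hfd ?_ s hs
      intro u hu
      rw [hderiv u hu]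
      have e : deriv (deriv B) u + l₁ * deriv B u + l₂ * f u =
          deriv (deriv B) u + (l₁ + l₂) * deriv B u + l₁ * l₂ * B u := by
        simp only [hf]; ring
      linarith [hineq u hu, e.ge]
    have hpos : (0:ℝ) < Real.exp (l₂ * s) := Real.exp_pos _
    have h1 : 0 ≤ f s * Real.exp (l₂ * s) := le_trans (by simpa [hf] using hB'0) h0
    have : 0 ≤ f s := nonneg_of_mul_nonneg_right (by linarith [mul_comm (f s) (Real.exp (l₂ * s))] : 0 ≤ Real.exp (l₂ * s) * f s) hpos
    simpa [hf] using this
  intro t ht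
  have h0 : B 0 ≤ B t * Real.exp (l₁ * t) := aux_gronwall l₁ B hB key t ht
  have e1 : Real.exp (l₁ * t) * Real.exp (-l₁ * t) = 1 := by
    rw [← Real.exp_add]; ring_nf; exact Real.exp_zero
  have hexp : (0:ℝ) < Real.exp (-l₁ * t) := Real.exp_pos _
  constructor
  · have := mul_le_mul_of_nonneg_right h0 hexp.le
    calc B 0 * Real.exp (-l₁ * t) ≤ B t * Real.exp (l₁ * t) * Real.exp (-l₁ * t) := this
      _ = B t * (Real.exp (l₁ * t) * Real.exp (-l₁ * t)) := by ring
      _ = B t := by rw [e1, mul_one]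
  · exact mul_nonneg hB0 hexp.le
end

section
/- Let n, m ∈ ℕ, and let q, q_r : ℝ → ℝⁿ be twice differentiable, H, H̄ : ℝ → Mat_{n×n}(ℝ) be differentiable matrix-valued functions, C, C̄ : ℝ → Mat_{n×n}(ℝ), Y : ℝ → Mat_{n×m}(ℝ), f_k : ℝ → ℝⁿ, τ : ℝ → ℝⁿ, Ψ ∈ ℝᵐ constant, Ψ̂ : ℝ → ℝᵐ differentiable, and Γ ∈ Mat_{m×m}(ℝ) symmetric positive definite. Define s = q̇ - q̇_r, Ψ̃ = Ψ̂ - Ψ, and V(t) = ½(s(t)ᵀH(t)s(t) + Ψ̃(t)ᵀΓ⁻¹Ψ̃(t)). Assume for all t: (i) τ = H q̈ + C q̇ + f_k; (ii) H is symmetric and Ḣ - 2C is skew-symmetric; (iii) (H - H̄) q̈_r + (C - C̄) q̇_r + f_k = Y Ψ; (iv) Ψ̂' = -Γ Yᵀ s. Then V is differentiable with V'(t) = s(t)ᵀ[τ(t) - H̄(t)q̈_r(t) - C̄(t)q̇_r(t) - Y(t)Ψ̂(t)] for all t. -/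
open Matrix

/-- Derivative of `u ↦ v u ⬝ᵥ (M u *ᵥ w u)` (product rule in matrix form). -/
lemma hasDerivAt_dot_mulVec {n : ℕ}
    (v w v' w' : ℝ → Fin n → ℝ) (M M' : ℝ → Matrix (Fin n) (Fin n) ℝ) (t : ℝ)
    (hv : ∀ i, HasDerivAt (fun u => v u i) (v' t i) t)
    (hw : ∀ i, HasDerivAt (fun u => w u i) (w' t i) t)
    (hM : ∀ i j, HasDerivAt (fun u => M u i j) (M' t i j) t) :
    HasDerivAt (fun u => v u ⬝ᵥ (M u *ᵥ w u))
      (v' t ⬝ᵥ (M t *ᵥ w t) + v t ⬝ᵥ (M' t *ᵥ w t) + v t ⬝ᵥ (M t *ᵥ w' t)) t := by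
  have key : HasDerivAt (fun u => ∑ i, v u i * ∑ j, M u i j * w u j)
      (∑ i, ((v' t i) * (∑ j, M t i j * w t j)
        + v t i * (∑ j, (M' t i j * w t j + M t i j * w' t j)))) t := by
    apply HasDerivAt.fun_sum
    intro i _
    exact (hv i).mul (HasDerivAt.fun_sum (fun j _ => (hM i j).mul (hw j)))
  have heq : (∑ i, ((v' t i) * (∑ j, M t i j * w t j)
        + v t i * (∑ j, (M' t i j * w t j + M t i j * w' t j))))
      = v' t ⬝ᵥ (M t *ᵥ w t) + v t ⬝ᵥ (M' t *ᵥ w t) + v t ⬝ᵥ (M t *ᵥ w' t) := by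
    simp only [dotProduct, mulVec, Finset.sum_add_distrib, mul_add, Finset.mul_sum]
    ring
  rw [heq] at key
  simpa only [dotProduct, mulVec] using key

lemma dot_mulVec_symm {n : ℕ} (M : Matrix (Fin n) (Fin n) ℝ) (hM : M.IsSymm)
    (a b : Fin n → ℝ) : a ⬝ᵥ (M *ᵥ b) = b ⬝ᵥ (M *ᵥ a) := by
  rw [dotProduct_mulVec]
  have : a ᵥ* M = M *ᵥ a := by
    conv_lhs => rw [← hM]
    exact vecMul_transpose M a
  rw [this, dotProduct_comm]

/-- Adaptive-control Lyapunov derivative identity: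
with `s = q̇ - q̇_r`, `Ψ̃ = Ψ̂ - Ψ`, `V = ½(sᵀ H s + Ψ̃ᵀ Γ⁻¹ Ψ̃)`, equation of motion
`τ = H q̈ + C q̇ + f_k`, `H` symmetric with `Ḣ - 2C` skew-symmetric, regressor relation
`(H - H̄) q̈_r + (C - C̄) q̇_r + f_k = Y Ψ`, and adaptation law `Ψ̂' = -Γ Yᵀ s`, one has
`V' = sᵀ (τ - H̄ q̈_r - C̄ q̇_r - Y Ψ̂)`. -/
theorem adaptive_lyapunov_derivative
    (n m : ℕ)
    (q qd qdd qr qrd qrdd : ℝ → Fin n → ℝ)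
    (H H' Hbar C Cbar : ℝ → Matrix (Fin n) (Fin n) ℝ)
    (Y : ℝ → Matrix (Fin n) (Fin m) ℝ)
    (fk τ : ℝ → Fin n → ℝ)
    (Ψ : Fin m → ℝ) (Ψhat : ℝ → Fin m → ℝ)
    (Γ : Matrix (Fin m) (Fin m) ℝ)
    (hΓsymm : Γ.IsSymm) (hΓpd : Γ.PosDef)
    (hq : ∀ t i, HasDerivAt (fun u => q u i) (qd t i) t)
    (hqd : ∀ t i, HasDerivAt (fun u => qd u i) (qdd t i) t)
    (hqr : ∀ t i, HasDerivAt (fun u => qr u i) (qrd t i) t)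
    (hqrd : ∀ t i, HasDerivAt (fun u => qrd u i) (qrdd t i) t)
    (hH : ∀ t i j, HasDerivAt (fun u => H u i j) (H' t i j) t)
    (s : ℝ → Fin n → ℝ) (hs : ∀ t, s t = qd t - qrd t)
    (Ψtil : ℝ → Fin m → ℝ) (hΨtil : ∀ t, Ψtil t = Ψhat t - Ψ)
    (V : ℝ → ℝ)
    (hV : ∀ t, V t = (1/2) * (s t ⬝ᵥ (H t *ᵥ s t) + Ψtil t ⬝ᵥ (Γ⁻¹ *ᵥ Ψtil t)))
    (heom : ∀ t, τ t = H t *ᵥ qdd t + C t *ᵥ qd t + fk t)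
    (hHsymm : ∀ t, (H t).IsSymm)
    (hskew : ∀ t, (H' t - (2 : ℝ) • C t)ᵀ = -(H' t - (2 : ℝ) • C t))
    (hregr : ∀ t, (H t - Hbar t) *ᵥ qrdd t + (C t - Cbar t) *ᵥ qrd t + fk t = Y t *ᵥ Ψ)
    (hadapt : ∀ t i, HasDerivAt (fun u => Ψhat u i) (-(Γ *ᵥ ((Y t)ᵀ *ᵥ s t)) i) t) :
    ∀ t, HasDerivAt V
      (s t ⬝ᵥ (τ t - Hbar t *ᵥ qrdd t - Cbar t *ᵥ qrd t - Y t *ᵥ Ψhat t)) t := by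
  intro t
  -- abbreviations at time t
  set st := s t with hst
  set sd : Fin n → ℝ := qdd t - qrdd t with hsd
  set pt := Ψtil t with hpt
  set pd : Fin m → ℝ := -(Γ *ᵥ ((Y t)ᵀ *ᵥ st)) with hpd
  -- V coincides with an explicit function
  have hVfun : V = fun u => (1/2) * ((qd u - qrd u) ⬝ᵥ (H u *ᵥ (qd u - qrd u))
      + (Ψhat u - Ψ) ⬝ᵥ (Γ⁻¹ *ᵥ (Ψhat u - Ψ))) := by
    funext u
    rw [hV u, hs u, hΨtil u]
  -- componentwise derivatives
  have hsder : ∀ i, HasDerivAt (fun u => (qd u - qrd u) i) (sd i) t := fun i => by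
    simpa [hsd] using (hqd t i).fun_sub (hqrd t i)
  have hpder : ∀ i, HasDerivAt (fun u => (Ψhat u - Ψ) i) (pd i) t := fun i => by
    simpa [hpd] using (hadapt t i).sub_const (Ψ i)
  -- derivative of the first quadratic form
  have h1 : HasDerivAt (fun u => (qd u - qrd u) ⬝ᵥ (H u *ᵥ (qd u - qrd u)))
      (sd ⬝ᵥ (H t *ᵥ (qd t - qrd t)) + (qd t - qrd t) ⬝ᵥ (H' t *ᵥ (qd t - qrd t))
        + (qd t - qrd t) ⬝ᵥ (H t *ᵥ sd)) t :=
    hasDerivAt_dot_mulVec _ _ (fun _ => sd) (fun _ => sd) H H' t hsder hsder (hH t)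
  -- derivative of the second quadratic form
  have h2 : HasDerivAt (fun u => (Ψhat u - Ψ) ⬝ᵥ (Γ⁻¹ *ᵥ (Ψhat u - Ψ)))
      (pd ⬝ᵥ (Γ⁻¹ *ᵥ (Ψhat t - Ψ)) + (Ψhat t - Ψ) ⬝ᵥ ((0 : Matrix (Fin m) (Fin m) ℝ) *ᵥ (Ψhat t - Ψ))
        + (Ψhat t - Ψ) ⬝ᵥ (Γ⁻¹ *ᵥ pd)) t :=
    hasDerivAt_dot_mulVec _ _ (fun _ => pd) (fun _ => pd) (fun _ => Γ⁻¹) (fun _ => 0) t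
      hpder hpder (fun i j => hasDerivAt_const t (Γ⁻¹ i j))
  have hVder := ((h1.fun_add h2).const_mul (1/2 : ℝ))
  rw [← hVfun] at hVder
  -- now identify the derivative values
  have hstq : st = qd t - qrd t := by rw [hst, hs t]
  have hptq : pt = Ψhat t - Ψ := by rw [hpt, hΨtil t]
  -- symmetry facts
  have hsymH : sd ⬝ᵥ (H t *ᵥ st) = st ⬝ᵥ (H t *ᵥ sd) := dot_mulVec_symm _ (hHsymm t) _ _
  have hΓinvsymm : (Γ⁻¹ : Matrix (Fin m) (Fin m) ℝ).IsSymm := by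
    unfold Matrix.IsSymm
    rw [Matrix.transpose_nonsing_inv, hΓsymm]
  have hsymG : pd ⬝ᵥ (Γ⁻¹ *ᵥ pt) = pt ⬝ᵥ (Γ⁻¹ *ᵥ pd) := dot_mulVec_symm _ hΓinvsymm _ _
  -- skew-symmetry: st ⬝ᵥ (H' t *ᵥ st) = 2 * (st ⬝ᵥ (C t *ᵥ st))
  have hskew' : st ⬝ᵥ ((H' t - (2:ℝ) • C t) *ᵥ st) = 0 := by
    have h := dotProduct_mulVec st (H' t - (2:ℝ) • C t) st
    have hvm : st ᵥ* (H' t - (2:ℝ) • C t) = (H' t - (2:ℝ) • C t)ᵀ *ᵥ st := by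
      conv_lhs => rw [← transpose_transpose (H' t - (2:ℝ) • C t)]
      exact vecMul_transpose _ st
    rw [hvm, hskew t, neg_mulVec, neg_dotProduct, dotProduct_comm] at h
    rw [dotProduct_comm]
    linarith
  have hskew2 : st ⬝ᵥ (H' t *ᵥ st) = 2 * (st ⬝ᵥ (C t *ᵥ st)) := by
    rw [sub_mulVec, dotProduct_sub, smul_mulVec, dotProduct_smul] at hskew'
    simp only [smul_eq_mul] at hskew'
    linarith
  -- adaptation term: pt ⬝ᵥ (Γ⁻¹ *ᵥ pd) = - st ⬝ᵥ (Y t *ᵥ pt)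
  have hdetu : IsUnit Γ.det := isUnit_iff_ne_zero.mpr (ne_of_gt hΓpd.det_pos)
  have hadapt2 : pt ⬝ᵥ (Γ⁻¹ *ᵥ pd) = -(st ⬝ᵥ (Y t *ᵥ pt)) := by
    rw [hpd, mulVec_neg, dotProduct_neg, mulVec_mulVec, ← mulVec_mulVec,
      mulVec_mulVec, Matrix.nonsing_inv_mul Γ hdetu, one_mulVec]
    rw [dotProduct_mulVec, vecMul_transpose, dotProduct_comm]
  -- the vector in the target equals H sd + C st - Y pt
  have hvec : τ t - Hbar t *ᵥ qrdd t - Cbar t *ᵥ qrd t - Y t *ᵥ Ψhat t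
      = H t *ᵥ sd + C t *ᵥ st - Y t *ᵥ pt := by
    have hY : Y t *ᵥ Ψhat t = Y t *ᵥ pt + ((H t - Hbar t) *ᵥ qrdd t
        + (C t - Cbar t) *ᵥ qrd t + fk t) := by
      rw [hregr t, hptq, ← mulVec_add]
      congr 1
      funext i
      simp [Pi.add_apply, Pi.sub_apply]
    rw [heom t, hY, hstq, hsd]
    funext i
    simp [mulVec_sub, sub_mulVec]
    ring
  -- conclude
  rw [← hstq, ← hptq] at hVder
  refine hVder.congr_deriv ?_
  rw [hvec, dotProduct_sub, dotProduct_add, zero_mulVec, dotProduct_zero,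
    hsymH, hskew2, hsymG, hadapt2]
  ring
end

section
/- Let ρ > 0 and ε > 0, and define P : ℝ → ℝ by P(h) = -ρ·ln(h) for h ≥ ε and P(h) = (ρ/2)·(((h - 2ε)/ε)² - 1) - ρ·ln(ε) for h < ε. Then P is strictly convex on ℝ. -/
/-- The relaxed barrier penalty function
`P h = -ρ ln h` for `h ≥ ε` and `P h = (ρ/2)(((h-2ε)/ε)² - 1) - ρ ln ε` for `h < ε`
is strictly convex on `ℝ`. -/
theorem relaxed_barrier_strictConvex
    (ρ ε : ℝ) (hρ : 0 < ρ) (hε : 0 < ε)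
    (P : ℝ → ℝ)
    (hP : ∀ h : ℝ, P h =
      if ε ≤ h then -ρ * Real.log h
      else ρ / 2 * (((h - 2 * ε) / ε) ^ 2 - 1) - ρ * Real.log ε) :
    StrictConvexOn ℝ Set.univ P := by
  set g : ℝ → ℝ := fun h => if ε ≤ h then -ρ / h else ρ / ε ^ 2 * (h - 2 * ε) with hg
  -- derivative of the quadratic branch
  have hQ : ∀ x : ℝ, HasDerivAt
      (fun h => ρ / 2 * (((h - 2 * ε) / ε) ^ 2 - 1) - ρ * Real.log ε)
      (ρ / ε ^ 2 * (x - 2 * ε)) x := by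
    intro x
    have h1 : HasDerivAt (fun h : ℝ => (h - 2 * ε) / ε) (1 / ε) x := by
      simpa using ((hasDerivAt_id x).sub_const (2 * ε)).div_const ε
    have h2 := (((h1.pow 2).sub_const 1).const_mul (ρ / 2)).sub_const (ρ * Real.log ε)
    refine h2.congr_deriv ?_
    norm_num
    field_simp
  -- derivative of the log branch
  have hL : ∀ x : ℝ, 0 < x → HasDerivAt (fun h => -ρ * Real.log h) (-ρ / x) x := by
    intro x hx
    have := (Real.hasDerivAt_log hx.ne').const_mul (-ρ)
    simpa [div_eq_mul_inv] using this
  -- derivative at the junction point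
  have hjunc : HasDerivAt P (-ρ / ε) ε := by
    have hA : HasDerivWithinAt P (-ρ / ε) (Set.Ici ε) ε := by
      apply ((hL ε hε).hasDerivWithinAt).congr
      · intro y hy
        rw [hP y, if_pos (Set.mem_Ici.mp hy)]
      · rw [hP ε, if_pos le_rfl]
    have hB : HasDerivWithinAt P (-ρ / ε) (Set.Iic ε) ε := by
      have hval : ρ / 2 * (((ε - 2 * ε) / ε) ^ 2 - 1) - ρ * Real.log ε
          = -ρ * Real.log ε := by
        have : ((ε - 2 * ε) / ε) ^ 2 = 1 := by field_simp; ring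
        rw [this]; ring
      have hD := (hQ ε).hasDerivWithinAt (s := Set.Iic ε)
      have heq : ρ / ε ^ 2 * (ε - 2 * ε) = -ρ / ε := by
        field_simp; ring
      rw [heq] at hD
      apply hD.congr
      · intro y hy
        rcases eq_or_lt_of_le (Set.mem_Iic.mp hy) with rfl | hy'
        · rw [hP y, if_pos le_rfl]
          have : ((y - 2 * y) / y) ^ 2 = 1 := by field_simp; ring
          rw [this]; ring
        · rw [hP y, if_neg (not_le.mpr hy')]
      · rw [hP ε, if_pos le_rfl, hval]
    have := hB.union hA
    rw [Set.Iic_union_Ici] at this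
    exact this.hasDerivAt (by simp)
  have hd : ∀ x : ℝ, HasDerivAt P (g x) x := by
    intro x
    rcases lt_trichotomy x ε with hx | rfl | hx
    · have : HasDerivAt P (ρ / ε ^ 2 * (x - 2 * ε)) x := by
        apply (hQ x).congr_of_eventuallyEq
        filter_upwards [eventually_lt_nhds hx] with y hy
        rw [hP y, if_neg (not_le.mpr hy)]
      simpa [hg, not_le.mpr hx] using this
    · simpa [hg, le_refl] using hjunc
    · have : HasDerivAt P (-ρ / x) x := by
        apply (hL x (hε.trans hx)).congr_of_eventuallyEq
        filter_upwards [eventually_gt_nhds hx] with y hy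
        rw [hP y, if_pos hy.le]
      simpa [hg, hx.le] using this
  have hmono : StrictMono g := by
    intro x y hxy
    simp only [hg]
    split_ifs with hx hy hy
    · -- both log branch
      have hx0 : 0 < x := hε.trans_le hx
      have hy0 : 0 < y := hε.trans_le hy
      rw [div_lt_div_iff₀ hx0 hy0]
      nlinarith
    · exact absurd (hx.trans hxy.le) hy
    · -- x quadratic, y log
      have hy0 : 0 < y := hε.trans_le hy
      have h1 : ρ / ε ^ 2 * (x - 2 * ε) < ρ / ε ^ 2 * (ε - 2 * ε) := by
        have : x - 2 * ε < ε - 2 * ε := by linarith [not_le.mp hx]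
        exact mul_lt_mul_of_pos_left this (by positivity)
      have h2 : ρ / ε ^ 2 * (ε - 2 * ε) = -ρ / ε := by field_simp; ring
      have h3 : -ρ / ε ≤ -ρ / y := by
        rw [div_le_div_iff₀ hε hy0]
        nlinarith
      linarith
    · -- both quadratic
      have : x - 2 * ε < y - 2 * ε := by linarith
      exact mul_lt_mul_of_pos_left this (by positivity)
  have hdiff : ∀ x : ℝ, deriv P x = g x := fun x => (hd x).deriv
  have hcont : ContinuousOn P Set.univ := fun x _ => ((hd x).continuousAt).continuousWithinAt
  apply StrictMonoOn.strictConvexOn_of_deriv convex_univ hcont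
  rw [interior_univ]
  intro a _ b _ hab
  rw [hdiff a, hdiff b]
  exact hmono hab
end
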